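/- Let z ∈ ℝ, let g be a real polynomial with g(z) ≠ 0, let k < p be natural numbers, let α : ℕ → ℝ satisfy α_{k+1} ≠ 0, and let f(ξ) = Σ_{m=k+1}^{p} α_m ξ^m. Then, as δ → 0⁺, the Rayleigh-type ratio [∫_z^{z+δ}∫_0^δ ((g′(ξ₁))²(f(ξ₂))² + (g(ξ₁))²(f′(ξ₂))²) dξ₂ dξ₁] / [∫_z^{z+δ}∫_0^δ g(ξ₁)f(ξ₂) dξ₂ dξ₁] is Θ(δ^{k-1}) (exponent taken in ℤ). -/

import Mathlib

/-!
The integrands separate, so numerator and denominator are sums of products of one-dimensional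
integrals. Over an interval of length `δ` on whose left end the integrand is `t ^ n * w t` with
`w` continuous and nonvanishing there, such an integral is `Θ(δ ^ (n + 1))` by l'Hôpital's rule.
Writing `f = ξ ^ (k + 1) * h` and `f' = ξ ^ k * w` with `h 0 = α (k + 1)` and
`w 0 = (k + 1) * α (k + 1)`, the term `∫ g'² ∫ f²` is `O(δ ^ (2k + 4))`, negligible against
`∫ g² ∫ f'² = Θ(δ ^ (2k + 2))`, while the denominator is `Θ(δ ^ (k + 3))`.
-/

open Filter Topology Asymptotics Polynomial intervalIntegral

theorem tendsto_integral_pow_mul_div_pow {w : ℝ → ℝ} (hw : Continuous w) (n : ℕ) :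
    Tendsto (fun δ => (∫ t in (0 : ℝ)..δ, t ^ n * w t) / δ ^ (n + 1)) (𝓝[>] 0)
      (𝓝 (w 0 / (n + 1))) := by
  have hcont : Continuous fun t : ℝ => t ^ n * w t := by fun_prop
  have hint : ∀ δ, HasDerivAt (fun δ => ∫ t in (0 : ℝ)..δ, t ^ n * w t) (δ ^ n * w δ) δ :=
    fun δ => (hcont.integral_hasStrictDerivAt 0 δ).hasDerivAt
  have hpow : ∀ δ : ℝ, HasDerivAt (fun δ => δ ^ (n + 1)) ((n + 1 : ℝ) * δ ^ n) δ := fun δ => by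
    simpa using hasDerivAt_pow (n + 1) δ
  refine HasDerivAt.lhopital_zero_nhdsGT (.of_forall hint) (.of_forall hpow) ?_ ?_ ?_ ?_
  · filter_upwards [self_mem_nhdsWithin] with δ (hδ : 0 < δ)
    positivity
  · simpa using ((hint 0).continuousAt.tendsto).mono_left nhdsWithin_le_nhds
  · simpa using ((hpow 0).continuousAt.tendsto).mono_left nhdsWithin_le_nhds
  · have hlim : Tendsto (fun δ => w δ / (n + 1)) (𝓝[>] 0) (𝓝 (w 0 / (n + 1))) :=
      ((hw.div_const _).tendsto 0).mono_left nhdsWithin_le_nhds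
    refine hlim.congr' ?_
    filter_upwards [self_mem_nhdsWithin] with δ (hδ : 0 < δ)
    field_simp

theorem isBigO_integral_pow_mul {w : ℝ → ℝ} (hw : Continuous w) (n : ℕ) :
    (fun δ => ∫ t in (0 : ℝ)..δ, t ^ n * w t) =O[𝓝[>] 0] fun δ => δ ^ (n + 1) := by
  refine isBigO_of_div_tendsto_nhds ?_ _ (tendsto_integral_pow_mul_div_pow hw n)
  filter_upwards [self_mem_nhdsWithin] with δ (hδ : 0 < δ) h
  exact absurd h (by positivity)

theorem isTheta_integral_pow_mul {w : ℝ → ℝ} (hw : Continuous w) (hw0 : w 0 ≠ 0) (n : ℕ) :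
    (fun δ => ∫ t in (0 : ℝ)..δ, t ^ n * w t) =Θ[𝓝[>] 0] fun δ => δ ^ (n + 1) :=
  (isTheta_of_div_tendsto_nhds_ne_zero (tendsto_integral_pow_mul_div_pow hw n)
    (div_ne_zero hw0 (by positivity))).symm

theorem isBigO_integral_add_right {w : ℝ → ℝ} (hw : Continuous w) (a : ℝ) :
    (fun δ => ∫ t in a..a + δ, w t) =O[𝓝[>] 0] fun δ => δ := by
  simpa using isBigO_integral_pow_mul (hw.comp (continuous_const_add a)) 0

theorem isTheta_integral_add_right {w : ℝ → ℝ} (hw : Continuous w) {a : ℝ} (ha : w a ≠ 0) :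
    (fun δ => ∫ t in a..a + δ, w t) =Θ[𝓝[>] 0] fun δ => δ := by
  simpa using isTheta_integral_pow_mul (hw.comp (continuous_const_add a)) (by simpa using ha) 0

theorem integral_integral_mul (u v : ℝ → ℝ) (a b c d : ℝ) :
    ∫ x in a..b, ∫ y in c..d, u x * v y = (∫ x in a..b, u x) * ∫ y in c..d, v y := by
  simp only [integral_const_mul, integral_mul_const]

theorem integral_integral_mul_add_mul {u₁ v₁ u₂ v₂ : ℝ → ℝ} (hu₁ : Continuous u₁)
    (hv₁ : Continuous v₁) (hu₂ : Continuous u₂) (hv₂ : Continuous v₂) (a b c d : ℝ) :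
    ∫ x in a..b, ∫ y in c..d, u₁ x * v₁ y + u₂ x * v₂ y =
      (∫ x in a..b, u₁ x) * (∫ y in c..d, v₁ y) + (∫ x in a..b, u₂ x) * ∫ y in c..d, v₂ y := by
  have hinner : ∀ x, ∫ y in c..d, u₁ x * v₁ y + u₂ x * v₂ y =
      u₁ x * (∫ y in c..d, v₁ y) + u₂ x * ∫ y in c..d, v₂ y := fun x => by
    rw [integral_add ((hv₁.intervalIntegrable c d).const_mul _)
      ((hv₂.intervalIntegrable c d).const_mul _), integral_const_mul, integral_const_mul]
  simp only [hinner]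
  rw [integral_add ((hu₁.intervalIntegrable a b).mul_const _)
    ((hu₂.intervalIntegrable a b).mul_const _), integral_mul_const, integral_mul_const]

theorem Polynomial.exists_eq_X_pow_mul {R : Type*} [CommSemiring R] {P : R[X]} {n : ℕ}
    (h : ∀ d < n, P.coeff d = 0) : ∃ H : R[X], P = X ^ n * H ∧ H.eval 0 = P.coeff n := by
  obtain ⟨H, rfl⟩ := X_pow_dvd_iff.mpr h
  refine ⟨H, rfl, ?_⟩
  rw [coeff_X_pow_mul', if_pos le_rfl, Nat.sub_self, coeff_zero_eq_eval_zero]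

theorem exists_sum_Icc_mul_pow_eq_pow_mul {R : Type*} [CommSemiring R] (α : ℕ → R) {k p : ℕ}
    (hkp : k < p) :
    ∃ H : R[X], H.eval 0 = α (k + 1) ∧
      ∀ t, ∑ m ∈ Finset.Icc (k + 1) p, α m * t ^ m = t ^ (k + 1) * H.eval t := by
  set P : R[X] := ∑ m ∈ Finset.Icc (k + 1) p, C (α m) * X ^ m
  have hcoeff : ∀ d, P.coeff d = if d ∈ Finset.Icc (k + 1) p then α d else 0 := fun d => by
    simp [P, finsetSum_coeff]
  obtain ⟨H, hP, hH⟩ := P.exists_eq_X_pow_mul (n := k + 1) fun d hd => by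
    rw [hcoeff, if_neg (by simp; omega)]
  refine ⟨H, by rw [hH, hcoeff, if_pos (by simp; omega)], fun t => ?_⟩
  simpa [P, eval_finsetSum] using congrArg (eval t) hP

theorem deriv_pow_succ_mul {𝕜 : Type*} [NontriviallyNormedField 𝕜] {h : 𝕜 → 𝕜} {t : 𝕜}
    (hh : DifferentiableAt 𝕜 h t) (n : ℕ) :
    deriv (fun t => t ^ (n + 1) * h t) t = t ^ n * ((n + 1) * h t + t * deriv h t) := by
  rw [deriv_fun_mul (differentiableAt_pow _) hh, deriv_pow_field]
  push_cast
  ring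

theorem isTheta_mul_add_mul_div_mul {a b c d e f : ℝ → ℝ} {i j m : ℕ} (him : i < m)
    (ha : a =O[𝓝[>] 0] fun δ => δ) (hb : b =O[𝓝[>] 0] fun δ => δ ^ m)
    (hc : c =Θ[𝓝[>] 0] fun δ => δ) (hd : d =Θ[𝓝[>] 0] fun δ => δ ^ i)
    (he : e =Θ[𝓝[>] 0] fun δ => δ) (hf : f =Θ[𝓝[>] 0] fun δ => δ ^ j) :
    (fun δ => (a δ * b δ + c δ * d δ) / (e δ * f δ)) =Θ[𝓝[>] 0] fun δ => δ ^ ((i : ℤ) - j) := by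
  have hab : (fun δ => a δ * b δ) =o[𝓝[>] 0] fun δ => δ * δ ^ i :=
    (ha.mul hb).trans_isLittleO
      (((isBigO_refl _ _).mul_isLittleO (isLittleO_pow_pow him)).mono nhdsWithin_le_nhds)
  have hnum := hab.add_isTheta (hc.mul hd)
  refine (hnum.div (he.mul hf)).trans_eventuallyEq ?_
  filter_upwards [self_mem_nhdsWithin] with δ (hδ : 0 < δ)
  rw [mul_div_mul_left _ _ hδ.ne', zpow_sub₀ hδ.ne', zpow_natCast, zpow_natCast]

/-- Configuration (b): for `φ(ξ₁,ξ₂) = g(ξ₁) f(ξ₂)` with `g(z) ≠ 0` and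
`f(ξ) = ∑_{m=k+1}^{p} α_m ξ^m`, `α_{k+1} ≠ 0`, the Rayleigh-type ratio
(squared H¹ seminorm over L¹ norm of `φ` on `[z,z+δ] × [0,δ]`) is `Θ(δ^{k-1})`
as `δ → 0⁺`, the exponent taken in `ℤ`. -/
theorem rayleigh_ratio_asymptotics_config_b (z : ℝ)
    (g : Polynomial ℝ) (hg : g.eval z ≠ 0)
    (k p : ℕ) (hkp : k < p) (α : ℕ → ℝ) (hα : α (k + 1) ≠ 0) :
    (fun δ : ℝ =>
        (∫ ξ₁ in z..(z + δ), ∫ ξ₂ in (0:ℝ)..δ,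
          ((Polynomial.derivative g).eval ξ₁) ^ 2 *
            (∑ m ∈ Finset.Icc (k + 1) p, α m * ξ₂ ^ m) ^ 2 +
          (g.eval ξ₁) ^ 2 *
            (deriv (fun t : ℝ => ∑ m ∈ Finset.Icc (k + 1) p, α m * t ^ m) ξ₂) ^ 2) /
        (∫ ξ₁ in z..(z + δ), ∫ ξ₂ in (0:ℝ)..δ,
          g.eval ξ₁ * ∑ m ∈ Finset.Icc (k + 1) p, α m * ξ₂ ^ m))
      =Θ[𝓝[>] (0:ℝ)] (fun δ : ℝ => δ ^ ((k : ℤ) - 1)) := by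
  obtain ⟨H, hH0, hf⟩ := exists_sum_Icc_mul_pow_eq_pow_mul α hkp
  obtain ⟨w, hw, hw0, hf'⟩ : ∃ w : ℝ → ℝ, Continuous w ∧ w 0 ≠ 0 ∧
      ∀ t, deriv (fun t : ℝ => ∑ m ∈ Finset.Icc (k + 1) p, α m * t ^ m) t = t ^ k * w t :=
    ⟨fun t => (k + 1) * H.eval t + t * H.derivative.eval t, by fun_prop,
      by simpa [hH0] using mul_ne_zero (by positivity) hα,
      fun t => by simp only [hf, deriv_pow_succ_mul H.differentiableAt, Polynomial.deriv]⟩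
  -- `hf'` must go first: `hf` would also rewrite the function under `deriv`.
  simp only [hf']
  simp only [hf, mul_pow, ← pow_mul]
  simp (disch := fun_prop) only [integral_integral_mul_add_mul, integral_integral_mul]
  convert isTheta_mul_add_mul_div_mul (by omega : k * 2 + 1 < (k + 1) * 2 + 1)
    (isBigO_integral_add_right (w := fun x => (derivative g).eval x ^ 2) (by fun_prop) z)
    (isBigO_integral_pow_mul (w := fun y => H.eval y ^ 2) (by fun_prop) ((k + 1) * 2))
    (isTheta_integral_add_right (w := fun x => g.eval x ^ 2) (by fun_prop) (pow_ne_zero 2 hg))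
    (isTheta_integral_pow_mul (w := fun y => w y ^ 2) (by fun_prop) (pow_ne_zero 2 hw0) (k * 2))
    (isTheta_integral_add_right (w := fun x => g.eval x) (by fun_prop) hg)
    (isTheta_integral_pow_mul (w := fun y => H.eval y) (by fun_prop) (by rwa [hH0]) (k + 1)) using 3
  push_cast
  ring
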